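/- For every k ∈ {0, ..., n} and s ∈ {1, 2}, the operation g : B^{2^{2^n}+1} → B is compatible with the binary relation R^k_s: whenever (u_1, w_1), ..., (u_l, w_l) ∈ R^k_s with l = 2^{2^n}+1, then (g(u_1, ..., u_l), g(w_1, ..., w_l)) ∈ R^k_s. -/
import Mathlib


/- The universe `B = {a₁, a₂, 0, 1, ..., n}` of size `n+3` is encoded as
`Fin (n+3)`, where `a₁` is encoded as `0`, `a₂` as `1`, and the element
`i ∈ {0, ..., n}` as `i+2`. -/

/-- The binary relation `R^i_j ⊆ B²` (for `i ∈ {0,…,n}`, `j ∈ {1,2}`):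
`(({a₁,a₂,0,…,i-1} × {a₁,a₂,i}) \ {(a_j, i)}) ∪ {(l,l) : i+1 ≤ l ≤ n}`.
In the encoding: the first coordinate has value `≤ i+1`, the second has value `0`,
`1` or `i+2`, excluding the pair `(j-1, i+2)`; the diagonal pairs have value `≥ i+3`. -/
def Rb (n i j : ℕ) : Set (Fin (n + 3) × Fin (n + 3)) :=
  {p | (p.1.val ≤ i + 1 ∧ (p.2.val = 0 ∨ p.2.val = 1 ∨ p.2.val = i + 2) ∧
          ¬(p.1.val = j - 1 ∧ p.2.val = i + 2)) ∨
        (p.1 = p.2 ∧ i + 3 ≤ p.1.val)}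

/-- `L_r(x)`: the number of coordinates of `x` whose value is strictly less than the
element `r` in the order `a₁ < a₂ < 0 < 1 < ⋯ < n` (encoded: value `< r + 2`);
for `r = n+1` this counts all coordinates. -/
def Lb (n : ℕ) {K : ℕ} (x : Fin K → Fin (n + 3)) (r : ℕ) : ℕ :=
  (Finset.univ.filter (fun q => (x q).val < r + 2)).card

/-- `F_x = {r ∈ {0, …, n} : L_{r+1}(x) > 2^(2^r) · L_r(x)}`. -/
def FsetB (n : ℕ) {K : ℕ} (x : Fin K → Fin (n + 3)) : Finset ℕ :=
  (Finset.range (n + 1)).filter (fun r => 2 ^ 2 ^ r * Lb n x r < Lb n x (r + 1))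

/-- The operation `g : B^(2^(2^n)+1) → B`: `g(x) = max F_x` if `F_x ≠ ∅` (the element
`max F_x`, encoded as `max F_x + 2`); otherwise `g(x) = a₂` if the number of
coordinates equal to `a₂` exceeds the number equal to `a₁`, and `g(x) = a₁` else. -/
def gop (n : ℕ) (x : Fin (2 ^ 2 ^ n + 1) → Fin (n + 3)) : Fin (n + 3) :=
  if h : (FsetB n x).Nonempty then
    ⟨(FsetB n x).max' h + 2, by
      have hmem := (FsetB n x).max'_mem h
      have h2 : (FsetB n x).max' h < n + 1 :=
        Finset.mem_range.mp (Finset.mem_filter.mp hmem).1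
      omega⟩
  else if (Finset.univ.filter (fun q => x q = 1)).card >
      (Finset.univ.filter (fun q => x q = 0)).card then 1
  else 0

private lemma chain_pow (f : ℕ → ℕ) :
    ∀ k, (∀ r, r < k → f (r + 1) ≤ 2 ^ 2 ^ r * f r) → f k ≤ 2 ^ (2 ^ k - 1) * f 0 := by
  intro k
  induction k with
  | zero => intro _; simp
  | succ k ih =>
    intro h
    have h1 : f (k + 1) ≤ 2 ^ 2 ^ k * f k := h k (Nat.lt_succ_self k)
    have h2 := ih (fun r hr => h r (hr.trans (Nat.lt_succ_self k)))
    have hpk : 1 ≤ 2 ^ k := Nat.one_le_two_pow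
    have hps : 2 ^ (k + 1) = 2 * 2 ^ k := by rw [pow_succ]; ring
    calc f (k + 1) ≤ 2 ^ 2 ^ k * f k := h1
      _ ≤ 2 ^ 2 ^ k * (2 ^ (2 ^ k - 1) * f 0) := Nat.mul_le_mul_left _ h2
      _ = 2 ^ (2 ^ (k + 1) - 1) * f 0 := by
          rw [← mul_assoc, ← pow_add]
          congr 2
          omega

/-- For every `k ∈ {0, …, n}` and `s ∈ {1, 2}`, the operation `g` is compatible with
`R^k_s`: if `(u_q, w_q) ∈ R^k_s` for every coordinate `q` (there are `2^(2^n)+1`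
coordinates), then `(g(u), g(w)) ∈ R^k_s`. -/
theorem stmt18 (n : ℕ) (k : ℕ) (hk : k ≤ n) (s : ℕ) (hs : s = 1 ∨ s = 2)
    (u w : Fin (2 ^ 2 ^ n + 1) → Fin (n + 3))
    (huw : ∀ q, (u q, w q) ∈ Rb n k s) :
    (gop n u, gop n w) ∈ Rb n k s := by
  have H : ∀ q, ((u q).val ≤ k + 1 ∧
      ((w q).val = 0 ∨ (w q).val = 1 ∨ (w q).val = k + 2) ∧
      ¬((u q).val = s - 1 ∧ (w q).val = k + 2)) ∨
      (u q = w q ∧ k + 3 ≤ (u q).val) := fun q => huw q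
  show ((gop n u).val ≤ k + 1 ∧
      ((gop n w).val = 0 ∨ (gop n w).val = 1 ∨ (gop n w).val = k + 2) ∧
      ¬((gop n u).val = s - 1 ∧ (gop n w).val = k + 2)) ∨
      (gop n u = gop n w ∧ k + 3 ≤ (gop n u).val)
  have hone : ((1 : Fin (n + 3)) : ℕ) = 1 := Fin.val_one (n + 1)
  have hzero : ((0 : Fin (n + 3)) : ℕ) = 0 := rfl
  -- L_r(u) = L_r(w) for r ≥ k+1
  have hLuw : ∀ r, k + 1 ≤ r → Lb n u r = Lb n w r := by
    intro r hr
    unfold Lb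
    congr 1
    apply Finset.filter_congr
    intro q _
    rcases H q with ⟨h1, h2, _⟩ | ⟨h1, h2⟩
    · omega
    · rw [h1]
  -- L_{k+1}(u) = L_k(u)
  have hLu : Lb n u (k + 1) = Lb n u k := by
    unfold Lb
    congr 1
    apply Finset.filter_congr
    intro q _
    rcases H q with ⟨h1, _, _⟩ | ⟨h1, h2⟩ <;> omega
  -- L_{r+1}(w) = L_r(w) for r < k
  have hLw : ∀ r, r < k → Lb n w (r + 1) = Lb n w r := by
    intro r hr
    unfold Lb
    congr 1
    apply Finset.filter_congr
    intro q _
    rcases H q with ⟨h1, h2, _⟩ | ⟨h1, h2⟩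
    · omega
    · rw [← h1]; omega
  have hmemF : ∀ (x : Fin (2 ^ 2 ^ n + 1) → Fin (n + 3)) r,
      r ∈ FsetB n x ↔ r ≤ n ∧ 2 ^ 2 ^ r * Lb n x r < Lb n x (r + 1) := by
    intro x r
    simp [FsetB, Nat.lt_succ_iff]
  -- k ∉ F_u
  have hku : k ∉ FsetB n u := by
    rw [hmemF, hLu]
    rintro ⟨_, hlt⟩
    have : 1 * Lb n u k ≤ 2 ^ 2 ^ k * Lb n u k :=
      Nat.mul_le_mul_right _ Nat.one_le_two_pow
    omega
  -- r ∉ F_w for r < k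
  have hrw : ∀ r, r < k → r ∉ FsetB n w := by
    intro r hr
    rw [hmemF, hLw r hr]
    rintro ⟨_, hlt⟩
    have : 1 * Lb n w r ≤ 2 ^ 2 ^ r * Lb n w r :=
      Nat.mul_le_mul_right _ Nat.one_le_two_pow
    omega
  -- agreement above k
  have hiff : ∀ r, k + 1 ≤ r → (r ∈ FsetB n u ↔ r ∈ FsetB n w) := by
    intro r hr
    rw [hmemF, hmemF, hLuw r hr, hLuw (r + 1) (by omega)]
  by_cases hex : ∃ r ∈ FsetB n u, k + 1 ≤ r
  · -- Case I: gop u = gop w, large value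
    obtain ⟨r, hrF, hrk⟩ := hex
    have hneu : (FsetB n u).Nonempty := ⟨r, hrF⟩
    have hnew : (FsetB n w).Nonempty := ⟨r, (hiff r hrk).mp hrF⟩
    set m := (FsetB n u).max' hneu with hm
    have hmr : r ≤ m := Finset.le_max' _ r hrF
    have hmk : k + 1 ≤ m := hrk.trans hmr
    have hmw : m ∈ FsetB n w := (hiff m hmk).mp ((FsetB n u).max'_mem hneu)
    have hmax : (FsetB n w).max' hnew = m := by
      apply le_antisymm
      · apply Finset.max'_le
        intro y hy
        by_cases hyk : k + 1 ≤ y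
        · exact Finset.le_max' _ y ((hiff y hyk).mpr hy)
        · omega
      · exact Finset.le_max' _ m hmw
    have hgu : (gop n u).val = m + 2 := by
      unfold gop; rw [dif_pos hneu]
    have hgw : (gop n w).val = m + 2 := by
      unfold gop; rw [dif_pos hnew]
      show (FsetB n w).max' hnew + 2 = m + 2
      rw [hmax]
    exact Or.inr ⟨Fin.ext (by rw [hgu, hgw]), by omega⟩
  · -- Case II: every element of F_u is < k
    push_neg at hex
    have hFu_lt : ∀ r ∈ FsetB n u, r < k := by
      intro r hr
      have h1 := hex r hr
      have h2 : r ≠ k := fun h => hku (h ▸ hr)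
      omega
    have hFw_eq : ∀ r ∈ FsetB n w, r = k := by
      intro r hr
      by_contra hne
      rcases Nat.lt_or_ge r k with h | h
      · exact hrw r h hr
      · have hh : k + 1 ≤ r := by omega
        have := hFu_lt r ((hiff r hh).mpr hr)
        omega
    by_cases hFw : k ∈ FsetB n w
    · -- gop w has value k+2
      have hnew : (FsetB n w).Nonempty := ⟨k, hFw⟩
      have hmaxw : (FsetB n w).max' hnew = k :=
        hFw_eq _ ((FsetB n w).max'_mem hnew)
      have hgw : (gop n w).val = k + 2 := by
        unfold gop; rw [dif_pos hnew]
        show (FsetB n w).max' hnew + 2 = k + 2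
        rw [hmaxw]
      by_cases hneu : (FsetB n u).Nonempty
      · -- gop u = m+2 with m < k
        set m := (FsetB n u).max' hneu with hm
        have hmk : m < k := hFu_lt _ ((FsetB n u).max'_mem hneu)
        have hgu : (gop n u).val = m + 2 := by
          unfold gop; rw [dif_pos hneu]
        refine Or.inl ⟨by omega, by omega, ?_⟩
        rintro ⟨h1, _⟩
        rcases hs with hs | hs <;> omega
      · -- counting argument
        have hgrow : ∀ r, r < k → Lb n u (r + 1) ≤ 2 ^ 2 ^ r * Lb n u r := by
          intro r hr
          by_contra hlt
          exact hneu ⟨r, (hmemF u r).mpr ⟨by omega, by omega⟩⟩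
        have hchain : Lb n u k ≤ 2 ^ (2 ^ k - 1) * Lb n u 0 :=
          chain_pow (Lb n u) k hgrow
        have hbig : 2 ^ 2 ^ k * Lb n w k < Lb n u k := by
          calc 2 ^ 2 ^ k * Lb n w k < Lb n w (k + 1) := ((hmemF w k).mp hFw).2
            _ = Lb n u (k + 1) := (hLuw (k + 1) le_rfl).symm
            _ = Lb n u k := hLu
        have hc : 2 * Lb n w k < Lb n u 0 := by
          have hsplit : 2 ^ 2 ^ k = 2 ^ (2 ^ k - 1) * 2 := by
            rw [← pow_succ]
            congr 1
            have : 1 ≤ 2 ^ k := Nat.one_le_two_pow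
            omega
          rw [hsplit] at hbig
          have h2 : 2 ^ (2 ^ k - 1) * (2 * Lb n w k) < 2 ^ (2 ^ k - 1) * Lb n u 0 := by
            calc 2 ^ (2 ^ k - 1) * (2 * Lb n w k)
                = 2 ^ (2 ^ k - 1) * 2 * Lb n w k := by ring
              _ < Lb n u k := hbig
              _ ≤ 2 ^ (2 ^ k - 1) * Lb n u 0 := hchain
          exact Nat.lt_of_mul_lt_mul_left h2
        set c0 := (Finset.univ.filter (fun q => u q = 0)).card with hc0
        set c1 := (Finset.univ.filter (fun q => u q = 1)).card with hc1
        have hval0 : ∀ y : Fin (n + 3), y = 0 ↔ y.val = 0 := by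
          intro y
          rw [Fin.ext_iff, hzero]
        have hval1 : ∀ y : Fin (n + 3), y = 1 ↔ y.val = 1 := by
          intro y
          rw [Fin.ext_iff, hone]
        have hL0 : Lb n u 0 = c0 + c1 := by
          unfold Lb
          rw [hc0, hc1]
          rw [show (Finset.univ.filter (fun q => (u q).val < 0 + 2)) =
              (Finset.univ.filter (fun q => u q = 0)) ∪
              (Finset.univ.filter (fun q => u q = 1)) from ?_]
          · apply Finset.card_union_of_disjoint
            rw [Finset.disjoint_filter]
            intro q _ h0 h1
            rw [hval0] at h0
            rw [hval1] at h1
            omega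
          · rw [← Finset.filter_or]
            apply Finset.filter_congr
            intro q _
            rw [hval0, hval1]
            omega
        -- #(u = s-1) ≤ L_k(w)
        have hcs : (Finset.univ.filter (fun q => (u q).val = s - 1)).card ≤ Lb n w k := by
          unfold Lb
          apply Finset.card_le_card
          intro q hq
          simp only [Finset.mem_filter, Finset.mem_univ, true_and] at hq ⊢
          rcases H q with ⟨h1, h2, h3⟩ | ⟨h1, h2⟩
          · rcases h2 with h2 | h2 | h2
            · omega
            · omega
            · exact absurd ⟨hq, h2⟩ h3
          · rcases hs with hs | hs <;> omega
        have hgu : gop n u = if c1 > c0 then 1 else 0 := by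
          unfold gop; rw [dif_neg hneu]
        rcases hs with hs | hs
        · -- s = 1 : majority must be a₂, gop u = 1
          have hcse : (Finset.univ.filter (fun q => (u q).val = s - 1)).card = c0 := by
            rw [hc0]
            congr 1
            apply Finset.filter_congr
            intro q _
            rw [hval0 (u q)]
            omega
          have h10 : c1 > c0 := by omega
          rw [hgu, if_pos h10]
          refine Or.inl ⟨by rw [hone]; omega, Or.inr (Or.inr hgw), ?_⟩
          rintro ⟨h1, _⟩
          rw [hone] at h1
          omega
        · -- s = 2 : majority must be a₁, gop u = 0
          have hcse : (Finset.univ.filter (fun q => (u q).val = s - 1)).card = c1 := by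
            rw [hc1]
            congr 1
            apply Finset.filter_congr
            intro q _
            rw [hval1 (u q)]
            omega
          have h10 : ¬ (c1 > c0) := by omega
          rw [hgu, if_neg h10]
          refine Or.inl ⟨by rw [hzero]; omega, Or.inr (Or.inr hgw), ?_⟩
          rintro ⟨h1, _⟩
          rw [hzero] at h1
          omega
    · -- F_w empty : both sides small
      have hFwe : ¬ (FsetB n w).Nonempty := by
        rintro ⟨r, hr⟩
        exact hFw (hFw_eq r hr ▸ hr)
      have hgw : (gop n w).val = 0 ∨ (gop n w).val = 1 := by
        unfold gop; rw [dif_neg hFwe]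
        split
        · exact Or.inr hone
        · exact Or.inl hzero
      have hgu : (gop n u).val ≤ k + 1 := by
        unfold gop
        by_cases hne : (FsetB n u).Nonempty
        · rw [dif_pos hne]
          have := hFu_lt _ ((FsetB n u).max'_mem hne)
          show (FsetB n u).max' hne + 2 ≤ k + 1
          omega
        · rw [dif_neg hne]
          split
          · rw [hone]; omega
          · rw [hzero]; omega
      refine Or.inl ⟨hgu, ?_, ?_⟩
      · rcases hgw with h | h
        · exact Or.inl h
        · exact Or.inr (Or.inl h)
      · rintro ⟨_, h2⟩
        omega
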